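/- Let Q_op : [0,T] → S^n_{++} satisfy the matrix ODE dQ_op/dt = A Q_op + Q_op A^T + λ(t) Q_op + (1/λ(t)) B_w Q_w B_w^T for a positive continuous function λ(·), and let x solve ẋ = A x + B_w w with x(0) = 0 and w(t) ∈ E(0, Q_w) for all t, where Q_op(0) = ε I for ε > 0. Then for every c ∈ ℝ^n and t ∈ [0,T], c^T x(t) ≤ sqrt(c^T Q_op(t) c); i.e., x(t) ∈ E(0, Q_op(t)). -/

import Mathlib

/-!
Let `V(t) = x(t)ᵀ Q_op(t)⁻¹ x(t)`. Differentiating and inserting the two ODEs, the AM–GM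
inequality `2 wᵀu ≤ λ + λ⁻¹ uᵀQ_w u` (valid since `w ∈ E(0, Q_w)`) gives `V' ≤ λ (1 - V)`.
Hence `V` can never cross the level `1` upwards, and `V(0) = 0`, so `x(t) ∈ E(0, Q_op(t))` for
all `t`. Cauchy–Schwarz for the inner product `Q_op(t)` then yields
`cᵀx ≤ √(cᵀ Q_op c) · √V ≤ √(cᵀ Q_op c)`.
-/

open Matrix Set
attribute [local instance] Matrix.linftyOpNormedAddCommGroup Matrix.linftyOpNormedSpace
  Matrix.linftyOpNormedRing Matrix.linftyOpNormedAlgebra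

/-- Matrix exponential over ℝ. -/
noncomputable def mexp {n : ℕ} (A : Matrix (Fin n) (Fin n) ℝ) : Matrix (Fin n) (Fin n) ℝ :=
  NormedSpace.exp A

/-- The ellipsoid `E(q,Q) = {q + Q^{1/2} v : vᵀv ≤ 1}` for `Q` positive semidefinite. -/
noncomputable def ellipsoid {n : ℕ} (q : Fin n → ℝ) {Q : Matrix (Fin n) (Fin n) ℝ}
    (hQ : Q.PosSemidef) : Set (Fin n → ℝ) :=
  {x | ∃ v : Fin n → ℝ, v ⬝ᵥ v ≤ 1 ∧ x = q + (hQ.1.eigenvectorUnitary.1 * diagonal ((↑) ∘ (Real.sqrt ∘ hQ.1.eigenvalues)) *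
    (star hQ.1.eigenvectorUnitary : Matrix (Fin n) (Fin n) ℝ)) *ᵥ v}

variable {m k : Type*} [Fintype m] [Fintype k]

theorem HasDerivAt.dotProduct {u v : ℝ → m → ℝ} {u' v' : m → ℝ} {t : ℝ}
    (hu : HasDerivAt u u' t) (hv : HasDerivAt v v' t) :
    HasDerivAt (fun s => u s ⬝ᵥ v s) (u' ⬝ᵥ v t + u t ⬝ᵥ v') t := by
  have h := HasDerivAt.fun_sum (u := Finset.univ) fun i _ =>
    (hasDerivAt_pi.1 hu i).fun_mul (hasDerivAt_pi.1 hv i)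
  rw [Finset.sum_add_distrib] at h
  exact h

theorem HasDerivAt.mulVec {M : ℝ → Matrix m k ℝ} {v : ℝ → k → ℝ} {M' : Matrix m k ℝ}
    {v' : k → ℝ} {t : ℝ} (hM : HasDerivAt M M' t) (hv : HasDerivAt v v' t) :
    HasDerivAt (fun s => M s *ᵥ v s) (M' *ᵥ v t + M t *ᵥ v') t := by
  refine hasDerivAt_pi.2 fun i => ?_
  let row : Matrix m k ℝ →L[ℝ] k → ℝ := LinearMap.toContinuousLinearMap (LinearMap.proj i)
  exact (row.hasFDerivAt.comp_hasDerivAt t hM).dotProduct hv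

theorem HasDerivAt.matrix_inv [DecidableEq m] {Q : ℝ → Matrix m m ℝ} {Q' : Matrix m m ℝ}
    {t : ℝ} (hQ : HasDerivAt Q Q' t) (hu : IsUnit (Q t)) :
    HasDerivAt (fun s => (Q s)⁻¹) (-((Q t)⁻¹ * Q' * (Q t)⁻¹)) t := by
  have hinv := hasFDerivAt_ringInverse (𝕜 := ℝ) hu.unit
  rw [hu.unit_spec] at hinv
  simp only [nonsing_inv_eq_ringInverse]
  convert hinv.comp_hasDerivAt t hQ using 1 <;> try rfl
  simp [ContinuousLinearMap.mulLeftRight, nonsing_inv_eq_ringInverse]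

theorem hasDerivAt_dotProduct_inv_mulVec [DecidableEq m] {x : ℝ → m → ℝ}
    {Q : ℝ → Matrix m m ℝ} {x' : m → ℝ} {Q' : Matrix m m ℝ} {t : ℝ}
    (hx : HasDerivAt x x' t) (hQ : HasDerivAt Q Q' t) (hQs : (Q t).IsSymm) (hQu : IsUnit (Q t)) :
    HasDerivAt (fun s => x s ⬝ᵥ (Q s)⁻¹ *ᵥ x s)
      (2 * (x' ⬝ᵥ (Q t)⁻¹ *ᵥ x t) - ((Q t)⁻¹ *ᵥ x t) ⬝ᵥ Q' *ᵥ ((Q t)⁻¹ *ᵥ x t)) t := by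
  convert hx.dotProduct ((hQ.matrix_inv hQu).mulVec hx) using 1
  have hP : ((Q t)⁻¹)ᵀ = (Q t)⁻¹ := hQs.inv.eq
  have hsymm : x t ⬝ᵥ (Q t)⁻¹ *ᵥ x' = x' ⬝ᵥ (Q t)⁻¹ *ᵥ x t := by
    rw [← dotProduct_transpose_mulVec, hP]
  have hsandwich : x t ⬝ᵥ ((Q t)⁻¹ * Q' * (Q t)⁻¹) *ᵥ x t =
      ((Q t)⁻¹ *ᵥ x t) ⬝ᵥ Q' *ᵥ ((Q t)⁻¹ *ᵥ x t) := by
    rw [← mulVec_mulVec, ← mulVec_mulVec, ← dotProduct_transpose_mulVec, hP, dotProduct_comm]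
  rw [dotProduct_add, neg_mulVec, dotProduct_neg, hsandwich, hsymm]
  ring

theorem image_le_of_deriv_neg_of_gt {f f' : ℝ → ℝ} {a b C : ℝ}
    (hf : ∀ t ∈ Icc a b, HasDerivAt f (f' t) t) (ha : f a ≤ C)
    (hneg : ∀ t ∈ Ico a b, C < f t → f' t < 0) : ∀ t ∈ Icc a b, f t ≤ C := by
  intro t ht
  refine le_of_forall_pos_le_add fun δ hδ => ?_
  refine image_le_of_deriv_right_lt_deriv_boundary
    (fun s hs => (hf s hs).continuousAt.continuousWithinAt)
    (fun s hs => (hf s (Ico_subset_Icc_self hs)).hasDerivWithinAt) (by linarith)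
    (fun _ => hasDerivAt_const _ (C + δ)) (fun s hs _ => hneg s hs (by linarith)) ht

theorem dotProduct_sq_le (a b : m → ℝ) : (a ⬝ᵥ b) ^ 2 ≤ (a ⬝ᵥ a) * (b ⬝ᵥ b) := by
  simpa only [dotProduct, sq] using Finset.sum_mul_sq_le_sq_mul_sq Finset.univ a b

namespace Matrix.PosSemidef

variable [DecidableEq m] {Q : Matrix m m ℝ}

/-- The square root `U √D Uᵀ` of `Q = U D Uᵀ` used in `ellipsoid`. -/
noncomputable def spectralSqrt (hQ : Q.PosSemidef) : Matrix m m ℝ :=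
  hQ.1.eigenvectorUnitary.1 * diagonal ((↑) ∘ (Real.sqrt ∘ hQ.1.eigenvalues)) *
    (star hQ.1.eigenvectorUnitary : Matrix m m ℝ)

theorem spectralSqrt_transpose (hQ : Q.PosSemidef) : hQ.spectralSqrtᵀ = hQ.spectralSqrt := by
  simp only [spectralSqrt, transpose_mul, diagonal_transpose, star_eq_conjTranspose,
    conjTranspose_eq_transpose_of_trivial, transpose_transpose, mul_assoc]

theorem spectralSqrt_mul_self (hQ : Q.PosSemidef) : hQ.spectralSqrt * hQ.spectralSqrt = Q := by
  have hD : diagonal ((↑) ∘ (Real.sqrt ∘ hQ.1.eigenvalues)) *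
      diagonal ((↑) ∘ (Real.sqrt ∘ hQ.1.eigenvalues)) =
      diagonal (RCLike.ofReal ∘ hQ.1.eigenvalues : m → ℝ) := by
    rw [diagonal_mul_diagonal]
    congr 1
    funext i
    simp [Real.mul_self_sqrt (hQ.eigenvalues_nonneg i)]
  conv_rhs => rw [hQ.1.spectral_theorem, Unitary.conjStarAlgAut_apply]
  simp only [spectralSqrt, mul_assoc]
  rw [← mul_assoc (star _ : Matrix m m ℝ) hQ.1.eigenvectorUnitary.1, Unitary.coe_star_mul_self,
    one_mul, ← mul_assoc (diagonal _) (diagonal _), hD]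

theorem dotProduct_mulVec_eq (hQ : Q.PosSemidef) (a b : m → ℝ) :
    a ⬝ᵥ Q *ᵥ b = (hQ.spectralSqrt *ᵥ a) ⬝ᵥ (hQ.spectralSqrt *ᵥ b) := by
  rw [dotProduct_comm (hQ.spectralSqrt *ᵥ a), ← dotProduct_transpose_mulVec _ a,
    hQ.spectralSqrt_transpose, mulVec_mulVec, hQ.spectralSqrt_mul_self]

theorem dotProduct_mulVec_sq_le (hQ : Q.PosSemidef) (a b : m → ℝ) :
    (a ⬝ᵥ Q *ᵥ b) ^ 2 ≤ (a ⬝ᵥ Q *ᵥ a) * (b ⬝ᵥ Q *ᵥ b) := by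
  simpa only [hQ.dotProduct_mulVec_eq] using dotProduct_sq_le _ _

end Matrix.PosSemidef

theorem sq_dotProduct_le_of_mem_ellipsoid {n : ℕ} {q w : Fin n → ℝ}
    {Q : Matrix (Fin n) (Fin n) ℝ} {hQ : Q.PosSemidef} (hw : w ∈ ellipsoid q hQ)
    (u : Fin n → ℝ) : ((w - q) ⬝ᵥ u) ^ 2 ≤ u ⬝ᵥ Q *ᵥ u := by
  obtain ⟨v, hv, rfl⟩ := hw
  have hSu : 0 ≤ (hQ.spectralSqrt *ᵥ u) ⬝ᵥ (hQ.spectralSqrt *ᵥ u) :=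
    Finset.sum_nonneg fun i _ => mul_self_nonneg _
  calc ((q + hQ.spectralSqrt *ᵥ v - q) ⬝ᵥ u) ^ 2
      = (v ⬝ᵥ hQ.spectralSqrt *ᵥ u) ^ 2 := by
        rw [add_sub_cancel_left, ← dotProduct_transpose_mulVec, hQ.spectralSqrt_transpose,
          dotProduct_comm]
    _ ≤ (v ⬝ᵥ v) * ((hQ.spectralSqrt *ᵥ u) ⬝ᵥ (hQ.spectralSqrt *ᵥ u)) := dotProduct_sq_le _ _
    _ ≤ u ⬝ᵥ Q *ᵥ u := by
        rw [hQ.dotProduct_mulVec_eq]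
        exact mul_le_of_le_one_left hSu hv

theorem dotProduct_le_sqrt_of_dotProduct_inv_mulVec_le_one [DecidableEq m] {Q : Matrix m m ℝ}
    (hQ : Q.PosDef) {x : m → ℝ} (hx : x ⬝ᵥ Q⁻¹ *ᵥ x ≤ 1) (c : m → ℝ) :
    c ⬝ᵥ x ≤ Real.sqrt (c ⬝ᵥ Q *ᵥ c) := by
  have hQQ : Q *ᵥ (Q⁻¹ *ᵥ x) = x := by
    rw [mulVec_mulVec, mul_nonsing_inv _ ((isUnit_iff_isUnit_det Q).1 hQ.isUnit), one_mulVec]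
  have hy : (Q⁻¹ *ᵥ x) ⬝ᵥ Q *ᵥ (Q⁻¹ *ᵥ x) = x ⬝ᵥ Q⁻¹ *ᵥ x := by
    rw [hQQ, dotProduct_comm]
  refine Real.le_sqrt_of_sq_le ?_
  calc (c ⬝ᵥ x) ^ 2 = (c ⬝ᵥ Q *ᵥ (Q⁻¹ *ᵥ x)) ^ 2 := by rw [hQQ]
    _ ≤ (c ⬝ᵥ Q *ᵥ c) * (x ⬝ᵥ Q⁻¹ *ᵥ x) := hy ▸ hQ.posSemidef.dotProduct_mulVec_sq_le _ _
    _ ≤ c ⬝ᵥ Q *ᵥ c := mul_le_of_le_one_right (hQ.posSemidef.dotProduct_mulVec_nonneg c) hx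

theorem two_mul_le_add_inv_mul_of_sq_le {l b r : ℝ} (hl : 0 < l) (hb : b ^ 2 ≤ r) :
    2 * b ≤ l + l⁻¹ * r := by
  have hl' : l * l⁻¹ = 1 := mul_inv_cancel₀ hl.ne'
  nlinarith [mul_nonneg (inv_pos.2 hl).le (sq_nonneg (l - b)),
    mul_le_mul_of_nonneg_left hb (inv_pos.2 hl).le]

/-- With `y = Q⁻¹ x` and `u = Bᵀ y`, the left-hand side equals
`2 w ⬝ u - l (y ⬝ Q y) - l⁻¹ (u ⬝ W u)`, and `x ⬝ Q⁻¹ x = y ⬝ Q y`. -/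
theorem lyapunov_deriv_le [DecidableEq m] {A Q : Matrix m m ℝ} {B : Matrix m k ℝ}
    {W : Matrix k k ℝ} {w : k → ℝ} {l : ℝ} (hQs : Q.IsSymm) (hQu : IsUnit Q) (hl : 0 < l)
    (hw : ∀ u, (w ⬝ᵥ u) ^ 2 ≤ u ⬝ᵥ W *ᵥ u) (x : m → ℝ) :
    2 * ((A *ᵥ x + B *ᵥ w) ⬝ᵥ Q⁻¹ *ᵥ x) -
        (Q⁻¹ *ᵥ x) ⬝ᵥ (A * Q + Q * Aᵀ + l • Q + l⁻¹ • (B * W * Bᵀ)) *ᵥ (Q⁻¹ *ᵥ x) ≤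
      l * (1 - x ⬝ᵥ Q⁻¹ *ᵥ x) := by
  have hdet := (isUnit_iff_isUnit_det Q).1 hQu
  obtain ⟨y, rfl⟩ : ∃ y, x = Q *ᵥ y :=
    ⟨Q⁻¹ *ᵥ x, by rw [mulVec_mulVec, mul_nonsing_inv _ hdet, one_mulVec]⟩
  have hy : Q⁻¹ *ᵥ Q *ᵥ y = y := by rw [mulVec_mulVec, nonsing_inv_mul _ hdet, one_mulVec]
  rw [hy]
  set u := Bᵀ *ᵥ y
  have hAQ : y ⬝ᵥ (Q * Aᵀ) *ᵥ y = A *ᵥ Q *ᵥ y ⬝ᵥ y := by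
    rw [← hQs.eq, ← transpose_mul, dotProduct_transpose_mulVec, hQs.eq, ← mulVec_mulVec,
      dotProduct_comm]
  have hQA : y ⬝ᵥ (A * Q) *ᵥ y = A *ᵥ Q *ᵥ y ⬝ᵥ y := by
    rw [← mulVec_mulVec, dotProduct_comm]
  have hBWB : y ⬝ᵥ (B * W * Bᵀ) *ᵥ y = u ⬝ᵥ W *ᵥ u := by
    rw [← mulVec_mulVec, ← mulVec_mulVec, dotProduct_mulVec, ← mulVec_transpose]
  have hBw : B *ᵥ w ⬝ᵥ y = w ⬝ᵥ u := by
    rw [dotProduct_comm, dotProduct_transpose_mulVec]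
  have hyQy : Q *ᵥ y ⬝ᵥ y = y ⬝ᵥ Q *ᵥ y := dotProduct_comm _ _
  simp only [add_mulVec, smul_mulVec, dotProduct_add, dotProduct_smul, add_dotProduct,
    smul_eq_mul, hAQ, hQA, hBWB, hBw, hyQy]
  linarith [two_mul_le_add_inv_mul_of_sq_le hl (hw u)]

theorem open_loop_ellipsoidal_bound_general {n p : ℕ}
    (A : Matrix (Fin n) (Fin n) ℝ) (Bw : Matrix (Fin n) (Fin p) ℝ)
    (Qw : Matrix (Fin p) (Fin p) ℝ) (hQw : Qw.PosDef)
    (T : ℝ)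
    (lam : ℝ → ℝ) (hlam : ∀ t, 0 < lam t)
    (Qop : ℝ → Matrix (Fin n) (Fin n) ℝ)
    (hQpos : ∀ t ∈ Set.Icc (0:ℝ) T, (Qop t).PosDef)
    (hQode : ∀ t ∈ Set.Icc (0:ℝ) T, HasDerivAt Qop
      (A * Qop t + Qop t * Aᵀ + lam t • Qop t + (lam t)⁻¹ • (Bw * Qw * Bwᵀ)) t)
    (w : ℝ → Fin p → ℝ) (hw : ∀ t, w t ∈ ellipsoid 0 hQw.posSemidef)
    (x : ℝ → Fin n → ℝ) (hx0 : x 0 = 0)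
    (hx : ∀ t ∈ Set.Icc (0:ℝ) T, HasDerivAt x (A *ᵥ x t + Bw *ᵥ w t) t) :
    ∀ c : Fin n → ℝ, ∀ t ∈ Set.Icc (0:ℝ) T, c ⬝ᵥ x t ≤ Real.sqrt (c ⬝ᵥ Qop t *ᵥ c) := by
  have hQs t (ht : t ∈ Icc (0:ℝ) T) : (Qop t).IsSymm := isHermitian_iff_isSymm.1 (hQpos t ht).1
  have hwQw t (u : Fin p → ℝ) : (w t ⬝ᵥ u) ^ 2 ≤ u ⬝ᵥ Qw *ᵥ u := by
    simpa only [sub_zero] using sq_dotProduct_le_of_mem_ellipsoid (hw t) u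
  have hV : ∀ t ∈ Icc (0:ℝ) T, x t ⬝ᵥ (Qop t)⁻¹ *ᵥ x t ≤ 1 := by
    refine image_le_of_deriv_neg_of_gt (fun t ht => hasDerivAt_dotProduct_inv_mulVec (hx t ht)
      (hQode t ht) (hQs t ht) (hQpos t ht).isUnit) (by simp [hx0]) fun t ht hVt => ?_
    have ht' := Ico_subset_Icc_self ht
    have hderiv := lyapunov_deriv_le (A := A) (B := Bw) (hQs t ht') (hQpos t ht').isUnit
      (hlam t) (hwQw t) (x t)
    linarith [mul_neg_of_pos_of_neg (hlam t) (sub_neg.2 hVt)]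
  exact fun c t ht => dotProduct_le_sqrt_of_dotProduct_inv_mulVec_le_one (hQpos t ht) (hV t ht) c

/-- if `Q_op` solves `Q̇ = AQ + QAᵀ + λ(t)Q + λ(t)⁻¹ B_w Q_w B_wᵀ` with
`Q_op(0) = εI` and is positive definite on `[0,T]`, and `x` solves `ẋ = Ax + B_w w` with
`x(0) = 0` and `w(t) ∈ E(0,Q_w)`, then `cᵀx(t) ≤ sqrt(cᵀ Q_op(t) c)` for all `c` and
`t ∈ [0,T]`. -/
theorem open_loop_ellipsoidal_bound {n p : ℕ}
    (A : Matrix (Fin n) (Fin n) ℝ) (Bw : Matrix (Fin n) (Fin p) ℝ)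
    (Qw : Matrix (Fin p) (Fin p) ℝ) (hQw : Qw.PosDef)
    (T ε : ℝ) (hε : 0 < ε)
    (lam : ℝ → ℝ) (hlamc : Continuous lam) (hlam : ∀ t, 0 < lam t)
    (Qop : ℝ → Matrix (Fin n) (Fin n) ℝ)
    (hQpos : ∀ t ∈ Set.Icc (0:ℝ) T, (Qop t).PosDef)
    (hQ0 : Qop 0 = ε • (1 : Matrix (Fin n) (Fin n) ℝ))
    (hQode : ∀ t ∈ Set.Icc (0:ℝ) T, HasDerivAt Qop
      (A * Qop t + Qop t * Aᵀ + lam t • Qop t + (lam t)⁻¹ • (Bw * Qw * Bwᵀ)) t)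
    (w : ℝ → Fin p → ℝ) (hw : ∀ t, w t ∈ ellipsoid 0 hQw.posSemidef)
    (x : ℝ → Fin n → ℝ) (hx0 : x 0 = 0)
    (hx : ∀ t ∈ Set.Icc (0:ℝ) T, HasDerivAt x (A *ᵥ x t + Bw *ᵥ w t) t) :
    ∀ c : Fin n → ℝ, ∀ t ∈ Set.Icc (0:ℝ) T, c ⬝ᵥ x t ≤ Real.sqrt (c ⬝ᵥ Qop t *ᵥ c) :=
  open_loop_ellipsoidal_bound_general A Bw Qw hQw T lam hlam Qop hQpos hQode w hw x hx0 hx
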